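/- On the region {(M, Λ) : M > 0, Λ > 0, 9ΛM² < 1}, define Ω_ph(M, Λ) := √(1 − 9ΛM²)/(3√3·M), c_Z(M, Λ) := (2 + 9ΛM²)/(27M²), and Δc(M, Λ) := −5√3·√(1 − 9ΛM²)/(162·M³). Then, at every point of this region, the partial derivatives of these functions satisfy the identity −(∂Δc/∂M)·c_Z·(∂Ω_ph/∂Λ) + (∂Δc/∂Λ)·c_Z·(∂Ω_ph/∂M) − 2·Δc·((∂Ω_ph/∂M)·(∂c_Z/∂Λ) − (∂Ω_ph/∂Λ)·(∂c_Z/∂M)) = 5·(9ΛM² − 4)/(1458·M⁵). -/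

import Mathlib

/-- The photon-sphere angular velocity `Ω_ph(M, Λ) = √(1 - 9ΛM²)/(3√3·M)`. -/
noncomputable def Ωph (M Λ : ℝ) : ℝ :=
  Real.sqrt (1 - 9 * Λ * M ^ 2) / (3 * Real.sqrt 3 * M)

/-- The linear Zeeman splitting coefficient `c_Z(M, Λ) = (2 + 9ΛM²)/(27M²)`. -/
noncomputable def cZ (M Λ : ℝ) : ℝ := (2 + 9 * Λ * M ^ 2) / (27 * M ^ 2)

/-- `Δc(M, Λ) = -5√3·√(1 - 9ΛM²)/(162M³)`, the difference of the second-order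
rotation coefficients of the equatorial Lyapunov exponent and orbital frequency. -/
noncomputable def Δc (M Λ : ℝ) : ℝ :=
  -5 * Real.sqrt 3 * Real.sqrt (1 - 9 * Λ * M ^ 2) / (162 * M ^ 3)

/-!
Each of the six partial derivatives has a closed form in `s = √(1 - 9ΛM²)`, e.g.
`∂_M Ω_ph = -1/(3√3 M² s)` because `9ΛM² + s² = 1`. Substituting them, `√3` cancels and `s`
enters only through `s² = 1 - 9ΛM²`, so the identity becomes a rational identity in `M` and `Λ`.
-/

open Real

section

variable {M Λ : ℝ}

lemma hasDerivAt_sqrt_one_sub_mass (hw : 9 * Λ * M ^ 2 < 1) :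
    HasDerivAt (fun M' => √(1 - 9 * Λ * M' ^ 2)) (-(9 * Λ * M) / √(1 - 9 * Λ * M ^ 2)) M := by
  refine ((((hasDerivAt_pow 2 M).const_mul (9 * Λ)).const_sub 1).sqrt (by linarith)).congr_deriv ?_
  field_simp
  ring

lemma hasDerivAt_sqrt_one_sub_lambda (hw : 9 * Λ * M ^ 2 < 1) :
    HasDerivAt (fun Λ' => √(1 - 9 * Λ' * M ^ 2)) (-(9 * M ^ 2) / (2 * √(1 - 9 * Λ * M ^ 2))) Λ := by
  refine ((((hasDerivAt_id' (x := Λ)).const_mul 9).mul_const (M ^ 2)).const_sub 1).sqrt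
    (by linarith) |>.congr_deriv ?_
  ring

lemma hasDerivAt_Ωph_mass (hM : M ≠ 0) (hw : 9 * Λ * M ^ 2 < 1) :
    HasDerivAt (fun M' => Ωph M' Λ) (-1 / (3 * √3 * M ^ 2 * √(1 - 9 * Λ * M ^ 2))) M := by
  have hs : 0 < √(1 - 9 * Λ * M ^ 2) := sqrt_pos.2 (by linarith)
  have hs2 := sq_sqrt (show 0 ≤ 1 - 9 * Λ * M ^ 2 by linarith)
  refine ((hasDerivAt_sqrt_one_sub_mass hw).div ((hasDerivAt_id' (x := M)).const_mul (3 * √3))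
    (by positivity)).congr_deriv ?_
  field_simp
  linear_combination (-1) * hs2

lemma hasDerivAt_Ωph_lambda (hw : 9 * Λ * M ^ 2 < 1) :
    HasDerivAt (fun Λ' => Ωph M Λ') (-(3 * M) / (2 * √3 * √(1 - 9 * Λ * M ^ 2))) Λ := by
  have hs : 0 < √(1 - 9 * Λ * M ^ 2) := sqrt_pos.2 (by linarith)
  refine ((hasDerivAt_sqrt_one_sub_lambda hw).div_const (3 * √3 * M)).congr_deriv ?_
  field_simp
  ring

lemma hasDerivAt_cZ_mass (hM : M ≠ 0) :
    HasDerivAt (fun M' => cZ M' Λ) (-4 / (27 * M ^ 3)) M := by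
  refine ((((hasDerivAt_pow 2 M).const_mul (9 * Λ)).const_add 2).div
    ((hasDerivAt_pow 2 M).const_mul 27) (by positivity)).congr_deriv ?_
  field_simp
  ring

lemma hasDerivAt_cZ_lambda (hM : M ≠ 0) :
    HasDerivAt (fun Λ' => cZ M Λ') (1 / 3) Λ := by
  refine ((((hasDerivAt_id' (x := Λ)).const_mul 9).mul_const (M ^ 2)).const_add 2).div_const
    (27 * M ^ 2) |>.congr_deriv ?_
  field_simp
  ring

lemma hasDerivAt_Δc_mass (hM : M ≠ 0) (hw : 9 * Λ * M ^ 2 < 1) :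
    HasDerivAt (fun M' => Δc M' Λ)
      (5 * √3 * (1 - 6 * Λ * M ^ 2) / (54 * M ^ 4 * √(1 - 9 * Λ * M ^ 2))) M := by
  have hs : 0 < √(1 - 9 * Λ * M ^ 2) := sqrt_pos.2 (by linarith)
  have hs2 := sq_sqrt (show 0 ≤ 1 - 9 * Λ * M ^ 2 by linarith)
  refine (((hasDerivAt_sqrt_one_sub_mass hw).const_mul (-5 * √3)).div
    ((hasDerivAt_pow 3 M).const_mul 162) (by positivity)).congr_deriv ?_
  field_simp
  linear_combination 162 * M ^ 2 * hs2

lemma hasDerivAt_Δc_lambda (hM : M ≠ 0) (hw : 9 * Λ * M ^ 2 < 1) :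
    HasDerivAt (fun Λ' => Δc M Λ') (5 * √3 / (36 * M * √(1 - 9 * Λ * M ^ 2))) Λ := by
  have hs : 0 < √(1 - 9 * Λ * M ^ 2) := sqrt_pos.2 (by linarith)
  refine (((hasDerivAt_sqrt_one_sub_lambda hw).const_mul (-5 * √3)).div_const
    (162 * M ^ 3)).congr_deriv ?_
  field_simp
  ring

end

theorem stmt_12_general (M Λ : ℝ) (hM : 0 < M) (hsub : 9 * Λ * M ^ 2 < 1) :
    -(deriv (fun M' => Δc M' Λ) M) * cZ M Λ * (deriv (fun Λ' => Ωph M Λ') Λ) +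
      (deriv (fun Λ' => Δc M Λ') Λ) * cZ M Λ * (deriv (fun M' => Ωph M' Λ) M) -
      2 * Δc M Λ *
        ((deriv (fun M' => Ωph M' Λ) M) * (deriv (fun Λ' => cZ M Λ') Λ) -
          (deriv (fun Λ' => Ωph M Λ') Λ) * (deriv (fun M' => cZ M' Λ) M)) =
      5 * (9 * Λ * M ^ 2 - 4) / (1458 * M ^ 5) := by
  have hM0 := hM.ne'
  rw [(hasDerivAt_Δc_mass hM0 hsub).deriv, (hasDerivAt_Δc_lambda hM0 hsub).deriv,
    (hasDerivAt_Ωph_mass hM0 hsub).deriv, (hasDerivAt_Ωph_lambda hsub).deriv,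
    (hasDerivAt_cZ_mass hM0).deriv, (hasDerivAt_cZ_lambda hM0).deriv]
  have hs : 0 < √(1 - 9 * Λ * M ^ 2) := sqrt_pos.2 (by linarith)
  have hs2 := sq_sqrt (show 0 ≤ 1 - 9 * Λ * M ^ 2 by linarith)
  unfold cZ Δc
  set s := √(1 - 9 * Λ * M ^ 2)
  field_simp
  rw [hs2]
  ring

/-- on the region `M > 0`, `Λ > 0`, `9ΛM² < 1`, the identity
`-(∂_M Δc)·c_Z·(∂_Λ Ω_ph) + (∂_Λ Δc)·c_Z·(∂_M Ω_ph)
  - 2Δc·((∂_M Ω_ph)(∂_Λ c_Z) - (∂_Λ Ω_ph)(∂_M c_Z)) = 5(9ΛM² - 4)/(1458M⁵)`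
holds, where `∂_M`, `∂_Λ` denote the partial derivatives in `M` and `Λ`. -/
theorem stmt_12 (M Λ : ℝ) (hM : 0 < M) (hΛ : 0 < Λ) (hsub : 9 * Λ * M ^ 2 < 1) :
    -(deriv (fun M' => Δc M' Λ) M) * cZ M Λ * (deriv (fun Λ' => Ωph M Λ') Λ) +
      (deriv (fun Λ' => Δc M Λ') Λ) * cZ M Λ * (deriv (fun M' => Ωph M' Λ) M) -
      2 * Δc M Λ *
        ((deriv (fun M' => Ωph M' Λ) M) * (deriv (fun Λ' => cZ M Λ') Λ) -
          (deriv (fun Λ' => Ωph M Λ') Λ) * (deriv (fun M' => cZ M' Λ) M)) =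
      5 * (9 * Λ * M ^ 2 - 4) / (1458 * M ^ 5) :=
  stmt_12_general M Λ hM hsub
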